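/- Let C ⊆ ℝ^n be a compact convex set, f : ℝ^n → ℝ convex and differentiable on an open set containing C, and suppose (C,f) satisfies the strong (M,0)-growth property for some M > 0. Let ℓ ∈ ℕ with ℓ ≥ 2, η_t = ℓ/(t+ℓ), m > 0, r ∈ (0,1), and suppose there is a threshold S ≥ max{1, ⌈2^{1/r}·ℓM/m^{1/r} − ℓ⌉} such that for every t ≥ S, the Frank–Wolfe iterates satisfy either subopt_t < (η_t·M/m)^{1/(1−r)} or m·subopt_t^{1−r} ≤ gap_t. Then for all t ≥ S: subopt_t ≤ max{ subopt_S · (η_{t−1}/η_{S−1})^ℓ, η_{t−1}^{min{ℓ, 1/(1−r), 2}} · ( (M/m)^{1/(1−r)} + M/2 ) }. -/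

import Mathlib

open Set Finset Real Pointwise

noncomputable section

abbrev Eucl (n : ℕ) := EuclideanSpace ℝ (Fin n)

variable {n : ℕ}

/-- A Frank–Wolfe vertex at `x`: a minimizer over `C` of the linear function `y ↦ ⟪∇f(x), y⟫`. -/
def IsFWVertex (C : Set (Eucl n)) (f : Eucl n → ℝ) (x v : Eucl n) : Prop :=
  v ∈ C ∧ ∀ y ∈ C, (inner ℝ (gradient f x) v : ℝ) ≤ (inner ℝ (gradient f x) y : ℝ)

/-- The Wolfe gap `gap(x) = max_{y ∈ C} ⟪∇f(x), x - y⟫`. -/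
def gapF (C : Set (Eucl n)) (f : Eucl n → ℝ) (x : Eucl n) : ℝ :=
  sSup ((fun y => (inner ℝ (gradient f x) (x - y) : ℝ)) '' C)

/-- The primal suboptimality gap `subopt(x) = f(x) - min_{y ∈ C} f(y)`. -/
def suboptF (C : Set (Eucl n)) (f : Eucl n → ℝ) (x : Eucl n) : ℝ :=
  f x - sInf (f '' C)

/-- Bregman divergence `D_f(y, x) = f(y) - f(x) - ⟪∇f(x), y - x⟫`. -/
def bregmanD (f : Eucl n → ℝ) (y x : Eucl n) : ℝ :=
  f y - f x - (inner ℝ (gradient f x) (y - x) : ℝ)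

/-- Strong `(M, r)`-growth property. -/
def StrongGrowth (C : Set (Eucl n)) (f : Eucl n → ℝ) (M r : ℝ) : Prop :=
  ∀ x ∈ C, ∀ v, IsFWVertex C f x v → ∀ η ∈ Icc (0:ℝ) 1,
    bregmanD f (x + η • (v - x)) x ≤ M * η ^ 2 / 2 * gapF C f x ^ r

/-- Weak `(M, r)`-growth property. -/
def WeakGrowth (C : Set (Eucl n)) (f : Eucl n → ℝ) (M r : ℝ) : Prop :=
  ∀ x ∈ C, ∀ v, IsFWVertex C f x v → ∀ η ∈ Icc (0:ℝ) 1,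
    bregmanD f (x + η • (v - x)) x * suboptF C f x ^ (1 - r) ≤ M * η ^ 2 / 2 * gapF C f x

/-- Gaps `(m, r)`-growth property. -/
def GapsGrowth (C : Set (Eucl n)) (f : Eucl n → ℝ) (m r : ℝ) : Prop :=
  ∀ x ∈ C, m * suboptF C f x ^ (1 - r) ≤ gapF C f x

/-- `primaldual_t = min_{0 ≤ k ≤ t} (f(x_t) - f(x_k) + gap_k)`. -/
def primaldualSeq (C : Set (Eucl n)) (f : Eucl n → ℝ) (x : ℕ → Eucl n) (t : ℕ) : ℝ :=
  (Finset.range (t + 1)).inf' (Finset.nonempty_range_iff.mpr (Nat.succ_ne_zero t))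
    (fun k => f (x t) - f (x k) + gapF C f (x k))

/-!
Write `h_t = subopt_t`. Strong `(M, 0)`-growth is the descent inequality
`h_{t+1} ≤ h_t - η_t gap_t + M η_t² / 2`, and with `h_t ≤ gap_t` it gives the classical rate
`h_t ≤ M η_t`; the choice of `S` makes this at most `(m / 2)^{1/r}` for `t ≥ S`.
At a step `t ≥ S`, either `h_t < (η_t M / m)^{1/(1-r)}`, and the descent inequality alone bounds
`h_{t+1}` by `η_t^{min(1/(1-r), 2)}` times the constant; or the gaps condition
`m h_t^{1-r} ≤ gap_t` holds, and since `h_t^r ≤ m / 2` it yields the contraction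
`h_{t+1} ≤ (1 - η_t) h_t ≤ (η_t / η_{t-1})^ℓ h_t` (Bernoulli). Both alternatives preserve the
maximum of the two bounds, so induction from `t = S` concludes.
-/

theorem ConvexOn.inner_gradient_sub_le {E : Type*} [NormedAddCommGroup E] [InnerProductSpace ℝ E]
    [CompleteSpace E] {C : Set E} {f : E → ℝ} (hf : ConvexOn ℝ C f) {x y : E} (hx : x ∈ C)
    (hy : y ∈ C) (hdiff : DifferentiableAt ℝ f x) :
    inner ℝ (gradient f x) (y - x) ≤ f y - f x := by
  let L : ℝ →ᵃ[ℝ] E := AffineMap.lineMap x y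
  have hderiv : HasDerivAt (f ∘ L) (inner ℝ (gradient f x) (y - x)) 0 := by
    simpa using hdiff.hasGradientAt.hasFDerivAt.comp_hasDerivAt_of_eq (0 : ℝ)
      AffineMap.hasDerivAt_lineMap (AffineMap.lineMap_apply_zero x y).symm
  have := (hf.comp_affineMap L).le_slope_of_hasDerivAt (x := 0) (y := 1)
    (by simpa [L] using hx) (by simpa [L] using hy) zero_lt_one hderiv
  simpa [slope_def_field, L] using this

theorem Convex.mem_of_eq_add_smul_sub {E : Type*} [AddCommGroup E] [Module ℝ E] {C : Set E}
    {η : ℕ → ℝ} {x v : ℕ → E} (hC : Convex ℝ C) (hx₀ : x 0 ∈ C) (hv : ∀ t, v t ∈ C)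
    (hη : ∀ t, η t ∈ Icc (0 : ℝ) 1) (hstep : ∀ t, x (t + 1) = x t + η t • (v t - x t)) :
    ∀ t, x t ∈ C
  | 0 => hx₀
  | t + 1 =>
    hstep t ▸ hC.add_smul_sub_mem (hC.mem_of_eq_add_smul_sub hx₀ hv hη hstep t) (hv t) (hη t)

section FrankWolfe

variable {C : Set (Eucl n)} {f : Eucl n → ℝ} {x v : Eucl n}

theorem IsFWVertex.gapF_eq (hv : IsFWVertex C f x v) :
    gapF C f x = inner ℝ (gradient f x) (x - v) := by
  refine IsGreatest.csSup_eq ⟨⟨v, hv.1, rfl⟩, ?_⟩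
  rintro _ ⟨y, hy, rfl⟩
  simp only [inner_sub_right]
  linarith [hv.2 y hy]

theorem suboptF_nonneg (hC : IsCompact C) (hf : ContinuousOn f C) (hx : x ∈ C) :
    0 ≤ suboptF C f x :=
  sub_nonneg.2 (csInf_le (hC.image_of_continuousOn hf).bddBelow ⟨x, hx, rfl⟩)

theorem suboptF_le_gapF (hf : ConvexOn ℝ C f) (hx : x ∈ C) (hdiff : DifferentiableAt ℝ f x)
    (hv : IsFWVertex C f x v) : suboptF C f x ≤ gapF C f x := by
  rw [hv.gapF_eq, suboptF, sub_le_comm]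
  refine le_csInf ⟨f x, x, hx, rfl⟩ ?_
  rintro _ ⟨y, hy, rfl⟩
  have hgrad := hf.inner_gradient_sub_le hx hy hdiff
  have hmin := hv.2 y hy
  simp only [inner_sub_right] at hgrad ⊢
  linarith

theorem StrongGrowth.suboptF_add_smul_sub_le {M η : ℝ} (hs : StrongGrowth C f M 0) (hx : x ∈ C)
    (hv : IsFWVertex C f x v) (hη : η ∈ Icc (0 : ℝ) 1) :
    suboptF C f (x + η • (v - x)) ≤ suboptF C f x - η * gapF C f x + M * η ^ 2 / 2 := by
  have hD := hs x hx v hv η hη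
  have hinner : inner ℝ (gradient f x) (η • (v - x)) = -(η * gapF C f x) := by
    rw [real_inner_smul_right, ← neg_sub x v, inner_neg_right, hv.gapF_eq, mul_neg]
  rw [Real.rpow_zero, mul_one, bregmanD, add_sub_cancel_left, hinner] at hD
  rw [suboptF, suboptF]
  linarith

end FrankWolfe

def openLoopStep (ℓ t : ℕ) : ℝ := ℓ / (t + ℓ)

section OpenLoopStep

variable {ℓ : ℕ}

theorem openLoopStep_pos (hℓ : 0 < ℓ) (t : ℕ) : 0 < openLoopStep ℓ t := by
  unfold openLoopStep
  positivity

theorem openLoopStep_le_one (t : ℕ) : openLoopStep ℓ t ≤ 1 :=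
  div_le_one_of_le₀ (by simp) (by positivity)

theorem openLoopStep_zero (hℓ : 0 < ℓ) : openLoopStep ℓ 0 = 1 := by
  simp [openLoopStep, hℓ.ne']

theorem openLoopStep_succ_div (hℓ : 0 < ℓ) (t : ℕ) :
    openLoopStep ℓ (t + 1) / openLoopStep ℓ t = 1 - 1 / (t + 1 + ℓ) := by
  have hℓ' : (0 : ℝ) < ℓ := by exact_mod_cast hℓ
  unfold openLoopStep
  field_simp
  push_cast
  ring

theorem openLoopStep_succ_le (t : ℕ) : openLoopStep ℓ (t + 1) ≤ openLoopStep ℓ t := by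
  unfold openLoopStep
  rcases Nat.eq_zero_or_pos ℓ with rfl | hℓ
  · simp
  · exact div_le_div_of_nonneg_left (by positivity) (by positivity) (by push_cast; linarith)

theorem one_sub_openLoopStep_succ_le (hℓ : 0 < ℓ) (t : ℕ) :
    1 - openLoopStep ℓ (t + 1) ≤ (openLoopStep ℓ (t + 1) / openLoopStep ℓ t) ^ ℓ := by
  have hpos : (0 : ℝ) < t + 1 + ℓ := by positivity
  have hle : 1 / ((t : ℝ) + 1 + ℓ) ≤ 1 :=
    div_le_one_of_le₀ (by linarith [t.cast_nonneg (α := ℝ)]) hpos.le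
  calc 1 - openLoopStep ℓ (t + 1) = 1 + ℓ * -(1 / ((t : ℝ) + 1 + ℓ)) := by
        simp only [openLoopStep]; push_cast; ring
    _ ≤ (1 + -(1 / ((t : ℝ) + 1 + ℓ))) ^ ℓ := one_add_mul_le_pow (by linarith) ℓ
    _ = _ := by rw [openLoopStep_succ_div hℓ, sub_eq_add_neg]

theorem one_sub_openLoopStep_mul_add_sq_le (hℓ : 2 ≤ ℓ) (t : ℕ) :
    (1 - openLoopStep ℓ t) * openLoopStep ℓ t + openLoopStep ℓ t ^ 2 / 2 ≤
      openLoopStep ℓ (t + 1) := by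
  have hℓ' : (2 : ℝ) ≤ ℓ := by exact_mod_cast hℓ
  have ht : (0 : ℝ) ≤ t := t.cast_nonneg
  have ha : (0 : ℝ) < t + ℓ := by positivity
  have hlhs : (1 - ℓ / ((t : ℝ) + ℓ)) * (ℓ / (t + ℓ)) + (ℓ / ((t : ℝ) + ℓ)) ^ 2 / 2 =
      ℓ * (2 * t + ℓ) / (2 * (t + ℓ) ^ 2) := by
    field_simp
    ring
  unfold openLoopStep
  push_cast
  rw [hlhs, div_le_div_iff₀ (by positivity) (by positivity)]
  nlinarith [mul_le_mul_of_nonneg_right hℓ' ht,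
    mul_le_mul_of_nonneg_right hℓ' (by linarith : (0 : ℝ) ≤ ℓ)]

theorem mul_openLoopStep_le {M c : ℝ} {t : ℕ} (hℓ : 0 < ℓ) (hc : 0 < c) (ht : ℓ * M / c - ℓ ≤ t) :
    M * openLoopStep ℓ t ≤ c := by
  have hpos : (0 : ℝ) < t + ℓ := by positivity
  rw [openLoopStep, mul_div_assoc', div_le_iff₀ hpos]
  rw [sub_le_iff_le_add, div_le_iff₀ hc] at ht
  linarith

end OpenLoopStep

theorem div_pow_mul_rpow_le {a b α : ℝ} {ℓ : ℕ} (ha : 0 < a) (hab : a ≤ b) (hα : α ≤ ℓ) :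
    (a / b) ^ ℓ * b ^ α ≤ a ^ α := by
  have hb : 0 < b := ha.trans_le hab
  calc (a / b) ^ ℓ * b ^ α = (a / b) ^ (ℓ : ℝ) * b ^ α := by rw [Real.rpow_natCast]
    _ ≤ (a / b) ^ α * b ^ α := by
        gcongr ?_ * _
        exact Real.rpow_le_rpow_of_exponent_ge (by positivity) ((div_le_one hb).2 hab) hα
    _ = a ^ α := by rw [Real.div_rpow ha.le hb.le, div_mul_cancel₀ _ (by positivity)]

theorem two_mul_le_mul_rpow_one_sub {r m h : ℝ} (hr : 0 < r) (hm : 0 ≤ m) (hh : 0 ≤ h)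
    (hsmall : h ≤ (m / 2) ^ (1 / r)) : 2 * h ≤ m * h ^ (1 - r) := by
  have hpow : h ^ r ≤ m / 2 := by
    simpa [Real.rpow_inv_rpow (by positivity : 0 ≤ m / 2) hr.ne'] using
      Real.rpow_le_rpow hh hsmall hr.le
  calc 2 * h = 2 * h ^ r * h ^ (1 - r) := by
        rw [mul_assoc, ← Real.rpow_add' hh (by simp), add_sub_cancel, Real.rpow_one]
    _ ≤ m * h ^ (1 - r) := by
        gcongr
        linarith

theorem le_one_sub_mul_of_rpow_le {r m M η h g h' : ℝ} (hr : r ∈ Ioo (0 : ℝ) 1) (hm : 0 < m)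
    (hM : 0 ≤ M) (hη : 0 ≤ η) (hlarge : (η * M / m) ^ (1 / (1 - r)) ≤ h)
    (hsmall : h ≤ (m / 2) ^ (1 / r)) (hgaps : m * h ^ (1 - r) ≤ g)
    (hdesc : h' ≤ h - η * g + M * η ^ 2 / 2) : h' ≤ (1 - η) * h := by
  have hh : 0 ≤ h := (Real.rpow_nonneg (by positivity) _).trans hlarge
  have hMη : η * M ≤ m * h ^ (1 - r) := by
    rw [one_div, Real.rpow_inv_le_iff_of_pos (by positivity) hh (by linarith [hr.2]),
      div_le_iff₀ hm] at hlarge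
    linarith
  have h2h := two_mul_le_mul_rpow_one_sub hr.1 hm.le hh hsmall
  nlinarith [mul_le_mul_of_nonneg_left (hMη.trans hgaps) hη,
    mul_le_mul_of_nonneg_left (h2h.trans hgaps) hη]

theorem le_rpow_mul_of_lt_rpow {p α m M η h g h' : ℝ} (hm : 0 < m) (hM : 0 ≤ M) (hη₀ : 0 < η)
    (hη₁ : η ≤ 1) (hαp : α ≤ p) (hα₂ : α ≤ 2) (hg : 0 ≤ g) (hlt : h < (η * M / m) ^ p)
    (hdesc : h' ≤ h - η * g + M * η ^ 2 / 2) : h' ≤ η ^ α * ((M / m) ^ p + M / 2) := by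
  have hp : η ^ p ≤ η ^ α := Real.rpow_le_rpow_of_exponent_ge hη₀ hη₁ hαp
  have h2 : η ^ 2 ≤ η ^ α := by
    simpa using Real.rpow_le_rpow_of_exponent_ge hη₀ hη₁ hα₂
  rw [mul_div_assoc, Real.mul_rpow hη₀.le (by positivity)] at hlt
  nlinarith [mul_le_mul_of_nonneg_right hp (Real.rpow_nonneg (div_nonneg hM hm.le) p),
    mul_le_mul_of_nonneg_left h2 hM, mul_nonneg hη₀.le hg]

section OpenLoopRecursion

variable {ℓ : ℕ} {h : ℕ → ℝ}

theorem le_mul_openLoopStep_of_le_one_sub_mul_add {M : ℝ} (hℓ : 2 ≤ ℓ) (hM : 0 ≤ M)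
    (hrec : ∀ t, h (t + 1) ≤ (1 - openLoopStep ℓ t) * h t + M * openLoopStep ℓ t ^ 2 / 2) :
    ∀ t, 1 ≤ t → h t ≤ M * openLoopStep ℓ t := by
  intro t ht
  induction t, ht using Nat.le_induction with
  | base =>
    have hquad := one_sub_openLoopStep_mul_add_sq_le hℓ 0
    have h₁ := hrec 0
    rw [openLoopStep_zero (by omega)] at hquad h₁
    nlinarith
  | succ t _ ih =>
    calc h (t + 1) ≤ (1 - openLoopStep ℓ t) * h t + M * openLoopStep ℓ t ^ 2 / 2 := hrec t
      _ ≤ (1 - openLoopStep ℓ t) * (M * openLoopStep ℓ t) + M * openLoopStep ℓ t ^ 2 / 2 := by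
        gcongr
        exact sub_nonneg.2 (openLoopStep_le_one t)
      _ = M * ((1 - openLoopStep ℓ t) * openLoopStep ℓ t + openLoopStep ℓ t ^ 2 / 2) := by ring
      _ ≤ M * openLoopStep ℓ (t + 1) := by
        gcongr
        exact one_sub_openLoopStep_mul_add_sq_le hℓ t

theorem le_max_of_le_one_sub_mul_or_le {S : ℕ} {α K : ℝ} (hℓ : 0 < ℓ) (hαℓ : α ≤ ℓ)
    (hK : 0 ≤ K) (hS : 1 ≤ S) (hh : ∀ t, 0 ≤ h t)
    (hstep : ∀ t, S ≤ t →
      h (t + 1) ≤ (1 - openLoopStep ℓ t) * h t ∨ h (t + 1) ≤ openLoopStep ℓ t ^ α * K) :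
    ∀ t, S ≤ t → h t ≤ max (h S * (openLoopStep ℓ (t - 1) / openLoopStep ℓ (S - 1)) ^ ℓ)
      (openLoopStep ℓ (t - 1) ^ α * K) := by
  intro t ht
  induction t, ht using Nat.le_induction with
  | base => simp [div_self (openLoopStep_pos hℓ _).ne']
  | succ t ht ih =>
    obtain ⟨s, rfl⟩ : ∃ s, t = s + 1 := ⟨t - 1, by omega⟩
    simp only [Nat.add_sub_cancel] at ih ⊢
    set ρ := openLoopStep ℓ (s + 1) / openLoopStep ℓ s
    have hρ : 0 ≤ ρ ^ ℓ := by positivity [openLoopStep_pos hℓ s, openLoopStep_pos hℓ (s + 1)]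
    rcases hstep (s + 1) ht with hcontract | hle
    · calc h (s + 1 + 1) ≤ (1 - openLoopStep ℓ (s + 1)) * h (s + 1) := hcontract
        _ ≤ ρ ^ ℓ * h (s + 1) :=
          mul_le_mul_of_nonneg_right (one_sub_openLoopStep_succ_le hℓ s) (hh _)
        _ ≤ ρ ^ ℓ * max (h S * (openLoopStep ℓ s / openLoopStep ℓ (S - 1)) ^ ℓ)
              (openLoopStep ℓ s ^ α * K) := mul_le_mul_of_nonneg_left ih hρ
        _ = max (h S * (openLoopStep ℓ (s + 1) / openLoopStep ℓ (S - 1)) ^ ℓ)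
              (ρ ^ ℓ * openLoopStep ℓ s ^ α * K) := by
          rw [mul_max_of_nonneg _ _ hρ, mul_left_comm, ← mul_pow,
            div_mul_div_cancel₀ (openLoopStep_pos hℓ s).ne', mul_assoc]
        _ ≤ _ := by
          gcongr
          exact div_pow_mul_rpow_le (openLoopStep_pos hℓ _) (openLoopStep_succ_le s) hαℓ
    · exact hle.trans (le_max_right _ _)

end OpenLoopRecursion

theorem fw_relaxed_gaps_growth_rate_general
    (n : ℕ) (C : Set (Eucl n)) (f : Eucl n → ℝ)
    (hCcomp : IsCompact C) (hCconv : Convex ℝ C)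
    (hfconv : ConvexOn ℝ C f)
    (U : Set (Eucl n)) (hUopen : IsOpen U) (hCU : C ⊆ U)
    (hfdiff : DifferentiableOn ℝ f U)
    (M m r : ℝ) (hM : 0 < M) (hm : 0 < m) (hr : r ∈ Ioo (0 : ℝ) 1)
    (hstrong : StrongGrowth C f M 0)
    (ℓ : ℕ) (hℓ : 2 ≤ ℓ)
    (η : ℕ → ℝ) (hη : ∀ t : ℕ, η t = (ℓ : ℝ) / ((t : ℝ) + ℓ))
    (x v : ℕ → Eucl n)
    (hx0 : x 0 ∈ C)
    (hv : ∀ t : ℕ, IsFWVertex C f (x t) (v t))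
    (hstep : ∀ t : ℕ, x (t + 1) = x t + η t • (v t - x t))
    (S : ℕ)
    (hS : max 1 (⌈(2 : ℝ) ^ (1 / r) * (ℓ : ℝ) * M / m ^ (1 / r) - (ℓ : ℝ)⌉.toNat) ≤ S)
    (hrelax : ∀ t : ℕ, S ≤ t →
      suboptF C f (x t) < (η t * M / m) ^ (1 / (1 - r)) ∨
        m * suboptF C f (x t) ^ (1 - r) ≤ gapF C f (x t))
    (t : ℕ) (ht : S ≤ t) :
    suboptF C f (x t) ≤
      max (suboptF C f (x S) * (η (t - 1) / η (S - 1)) ^ ℓ)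
        (η (t - 1) ^ min (min (ℓ : ℝ) (1 / (1 - r))) 2 *
          ((M / m) ^ (1 / (1 - r)) + M / 2)) := by
  obtain rfl : η = openLoopStep ℓ := funext hη
  have hηIcc (t : ℕ) : openLoopStep ℓ t ∈ Icc (0 : ℝ) 1 :=
    ⟨(openLoopStep_pos (by omega) t).le, openLoopStep_le_one t⟩
  have hmem := hCconv.mem_of_eq_add_smul_sub hx0 (fun t => (hv t).1) hηIcc hstep
  have hdiffAt (t : ℕ) : DifferentiableAt ℝ f (x t) :=
    hfdiff.differentiableAt (hUopen.mem_nhds (hCU (hmem t)))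
  have hnonneg (t : ℕ) : 0 ≤ suboptF C f (x t) :=
    suboptF_nonneg hCcomp (hfdiff.continuousOn.mono hCU) (hmem t)
  have hgap (t : ℕ) := suboptF_le_gapF hfconv (hmem t) (hdiffAt t) (hv t)
  have hdesc (t : ℕ) := hstep t ▸ hstrong.suboptF_add_smul_sub_le (hmem t) (hv t) (hηIcc t)
  have hrate := le_mul_openLoopStep_of_le_one_sub_mul_add (h := fun t => suboptF C f (x t)) hℓ
    hM.le fun t => by nlinarith [hdesc t, mul_le_mul_of_nonneg_left (hgap t) (hηIcc t).1]
  have hsmall (t : ℕ) (ht : S ≤ t) : suboptF C f (x t) ≤ (m / 2) ^ (1 / r) := by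
    refine (hrate t (by omega)).trans (mul_openLoopStep_le (by omega) (by positivity) ?_)
    have hceil : (2 : ℝ) ^ (1 / r) * ℓ * M / m ^ (1 / r) - ℓ ≤ t :=
      Nat.ceil_le.1 (by rw [← Int.ceil_toNat]; omega)
    convert hceil using 2
    rw [Real.div_rpow hm.le zero_le_two]
    field_simp
  refine le_max_of_le_one_sub_mul_or_le (by omega) ((min_le_left _ _).trans (min_le_left _ _))
    (by positivity) (by omega) hnonneg (fun t ht => ?_) t ht
  rcases lt_or_ge (suboptF C f (x t)) ((openLoopStep ℓ t * M / m) ^ (1 / (1 - r))) with hlt | hge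
  · exact Or.inr (le_rpow_mul_of_lt_rpow hm hM.le (openLoopStep_pos (by omega) t) (hηIcc t).2
      ((min_le_left _ _).trans (min_le_right _ _)) (min_le_right _ _)
      ((hnonneg t).trans (hgap t)) hlt (hdesc t))
  · exact Or.inl (le_one_sub_mul_of_rpow_le hr hm hM.le (hηIcc t).1 hge (hsmall t ht)
      ((hrelax t ht).resolve_left hge.not_gt) (hdesc t))

/-- **Theorem (relaxed gaps growth, suboptimality rate).** -/
theorem fw_relaxed_gaps_growth_rate
    (n : ℕ) (C : Set (Eucl n)) (f : Eucl n → ℝ)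
    (hCcomp : IsCompact C) (hCconv : Convex ℝ C) (hCne : C.Nonempty)
    (hfconv : ConvexOn ℝ C f)
    (U : Set (Eucl n)) (hUopen : IsOpen U) (hCU : C ⊆ U)
    (hfdiff : DifferentiableOn ℝ f U)
    (M m r : ℝ) (hM : 0 < M) (hm : 0 < m) (hr : r ∈ Ioo (0 : ℝ) 1)
    (hstrong : StrongGrowth C f M 0)
    (ℓ : ℕ) (hℓ : 2 ≤ ℓ)
    (η : ℕ → ℝ) (hη : ∀ t : ℕ, η t = (ℓ : ℝ) / ((t : ℝ) + ℓ))
    (x v : ℕ → Eucl n)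
    (hx0 : x 0 ∈ C)
    (hv : ∀ t : ℕ, IsFWVertex C f (x t) (v t))
    (hstep : ∀ t : ℕ, x (t + 1) = x t + η t • (v t - x t))
    (S : ℕ)
    (hS : max 1 (⌈(2 : ℝ) ^ (1 / r) * (ℓ : ℝ) * M / m ^ (1 / r) - (ℓ : ℝ)⌉.toNat) ≤ S)
    (hrelax : ∀ t : ℕ, S ≤ t →
      suboptF C f (x t) < (η t * M / m) ^ (1 / (1 - r)) ∨
        m * suboptF C f (x t) ^ (1 - r) ≤ gapF C f (x t))
    (t : ℕ) (ht : S ≤ t) :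
    suboptF C f (x t) ≤
      max (suboptF C f (x S) * (η (t - 1) / η (S - 1)) ^ ℓ)
        (η (t - 1) ^ min (min (ℓ : ℝ) (1 / (1 - r))) 2 *
          ((M / m) ^ (1 / (1 - r)) + M / 2)) :=
  fw_relaxed_gaps_growth_rate_general n C f hCcomp hCconv hfconv U hUopen hCU hfdiff M m r hM hm hr
    hstrong ℓ hℓ η hη x v hx0 hv hstep S hS hrelax t ht
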